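/- Let G be a finite group, N a normal subgroup of G, and let ℤG → ℤ(G/N) be the natural ring homomorphism. Let g ∈ G and let u_{k,m}(gN) be a Bass unit of ℤ(G/N), i.e. k, m are positive integers with k^m ≡ 1 (mod |gN|). Then there exist a positive integer s and a Bass unit u_{k',m'}(g) of ℤG based on g, with k' ≡ k (mod |gN|) and k'^{m'} ≡ 1 (mod |g|), whose image under the natural homomorphism equals u_{k,m}(gN)^s. -/

import Mathlib

/- Common definitions for formalizing "Group rings of finite strongly monomial
groups: central units and primitive idempotents" (arXiv:1209.1269). -/

open scoped BigOperators

namespace ArXiv12091269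

open scoped Classical

noncomputable section

/-- product of the values of `f` over a finite set, in a (possibly
noncommutative) monoid; in all uses below the factors commute, so that the
result does not depend on the enumeration order. -/
def finProd {alpha M : Type*} [Monoid M] (s : Finset alpha) (f : alpha → M) : M :=
  (s.toList.map f).prod

variable {G : Type*} [Group G]

instance (priority := 100) [Finite G] : Finite (Subgroup G) :=
  Finite.of_injective (fun S => (S : Set G)) SetLike.coe_injective

/-- `Ĥ = (1/|H|) ∑_{h ∈ H} h` in `ℚG`. -/
def hatQ [Finite G] (S : Subgroup G) : MonoidAlgebra ℚ G :=
  (Nat.card S : ℚ)⁻¹ • ∑ x ∈ (S : Set G).toFinite.toFinset, MonoidAlgebra.of ℚ G x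

/-- `M` is a minimal element of the set of subgroups of `H` that are normal in `H`
and contain `K` properly. -/
def IsMinNormalAbove (H K M : Subgroup G) : Prop :=
  M ≤ H ∧ K < M ∧ (∀ h ∈ H, ∀ x ∈ M, h * x * h⁻¹ ∈ M) ∧
    ∀ M' : Subgroup G, M' ≤ H → K < M' →
      (∀ h ∈ H, ∀ x ∈ M', h * x * h⁻¹ ∈ M') → M' ≤ M → M' = M

/-- `ε(H,K) = K̂ ∏ (1 - M̂)`, the product running over the minimal normal
subgroups of `H` containing `K` properly; `ε(H,H) = Ĥ`. -/
def epsQ [Finite G] (H K : Subgroup G) : MonoidAlgebra ℚ G :=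
  if K = H then hatQ H
  else hatQ K * finProd {M | IsMinNormalAbove H K M}.toFinite.toFinset (fun M => 1 - hatQ M)

/-- conjugate `α^g = g⁻¹ α g` in `ℚG`. -/
def aconj (g : G) (α : MonoidAlgebra ℚ G) : MonoidAlgebra ℚ G :=
  MonoidAlgebra.of ℚ G g⁻¹ * α * MonoidAlgebra.of ℚ G g

/-- `e(G,H,K)`, the sum of the distinct `G`-conjugates of `ε(H,K)`. -/
def eGHK [Finite G] (H K : Subgroup G) : MonoidAlgebra ℚ G :=
  ∑ β ∈ (Set.range fun g : G => aconj g (epsQ H K)).toFinite.toFinset, β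

/-- `(H,K)` is a strong Shoda pair of `G`: `K ≤ H ⊴ N_G(K)`, `H/K` is cyclic and
a maximal abelian subgroup of `N_G(K)/K`, and distinct `G`-conjugates of `ε(H,K)`
are orthogonal. -/
def IsStrongShodaPair [Finite G] (H K : Subgroup G) : Prop :=
  K ≤ H ∧ H ≤ Subgroup.normalizer (K : Set G) ∧
  (∀ n ∈ Subgroup.normalizer (K : Set G), ∀ x ∈ H, n * x * n⁻¹ ∈ H) ∧
  (∃ h ∈ H, ∀ x ∈ H, ∃ z : ℤ, x⁻¹ * h ^ z ∈ K) ∧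
  (∀ x ∈ H, ∀ y ∈ H, x * y * x⁻¹ * y⁻¹ ∈ K) ∧
  (∀ B : Subgroup G, K ≤ B → B ≤ Subgroup.normalizer (K : Set G) →
      (∀ x ∈ B, ∀ y ∈ B, x * y * x⁻¹ * y⁻¹ ∈ K) → H ≤ B → B = H) ∧
  (∀ g g' : G, aconj g (epsQ H K) ≠ aconj g' (epsQ H K) →
      aconj g (epsQ H K) * aconj g' (epsQ H K) = 0)

/-- a primitive central idempotent of a ring. -/
def IsPrimitiveCentralIdem {R : Type*} [Ring R] (e : R) : Prop :=
  e ∈ Subring.center R ∧ e * e = e ∧ e ≠ 0 ∧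
  ∀ f₁ f₂ : R, f₁ ∈ Subring.center R → f₂ ∈ Subring.center R →
    f₁ * f₁ = f₁ → f₂ * f₂ = f₂ → f₁ * f₂ = 0 → e = f₁ + f₂ → f₁ = 0 ∨ f₂ = 0

/-- a primitive idempotent of the (corner) ring `eRe` determined by a central
idempotent `e` of `R`; for `e = 1` this is a primitive idempotent of `R`. -/
def IsPrimIdemInCorner {R : Type*} [Ring R] (e f : R) : Prop :=
  f ≠ 0 ∧ f * f = f ∧ f * e = f ∧ e * f = f ∧
  ∀ f₁ f₂ : R, f₁ * e = f₁ → e * f₁ = f₁ → f₂ * e = f₂ → e * f₂ = f₂ →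
    f₁ * f₁ = f₁ → f₂ * f₂ = f₂ → f₁ * f₂ = 0 → f₂ * f₁ = 0 →
    f = f₁ + f₂ → f₁ = 0 ∨ f₂ = 0

/-- the Bass unit `u_{k,m}(x)` based on a torsion unit `x` of order `n`. -/
def bassUnit {R : Type*} [Ring R] (x : R) (n k m : ℕ) : R :=
  (∑ i ∈ Finset.range k, x ^ i) ^ m +
    ((1 - (k : ℤ) ^ m) / (n : ℤ)) • ∑ i ∈ Finset.range n, x ^ i

/-- the cyclotomic unit `η_k(ξ)`, with the convention `η_k(1) = 1`. -/
def eta {F : Type*} [Field F] (k : ℕ) (ξ : F) : F :=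
  if ξ = 1 then 1 else (1 - ξ ^ k) / (1 - ξ)

/-- a virtual basis of an abelian group: a set of multiplicatively independent
elements generating a subgroup of finite index. -/
def IsVirtualBasis {A : Type*} [CommGroup A] (S : Set A) : Prop :=
  (∀ f : A →₀ ℤ, ↑f.support ⊆ S → (f.prod fun a z => a ^ z) = 1 → f = 0) ∧
  (Subgroup.closure S).FiniteIndex

/-- `ν` is a positive integer such that `u_{k,m}(1 - K̂ + g K̂)^ν ∈ ℤ G` for all
`g ∈ H` and all admissible `k`, `m`;  `n_{H,K}` is the least such `ν`. -/
def IsBassExpBound [Finite G] (H K : Subgroup G) (ν : ℕ) : Prop :=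
  0 < ν ∧ ∀ g ∈ H, ∀ k m : ℕ, 0 < k → 0 < m →
    Nat.gcd k (orderOf g) = 1 → k ^ m ≡ 1 [MOD orderOf g] →
    ∀ w : G, ∃ z : ℤ,
      ((bassUnit (MonoidAlgebra.of ℚ G g * hatQ K + 1 - hatQ K) (orderOf g) k m) ^ ν).coeff w = z

/-- the recursion defining the units `c_j^s(H,K,k,r)` (for the cyclic section `H/K`
of order `p^n` with distinguished generator `g` modulo `K`): `c` satisfies
`c s s = 1` and, for `j < s ≤ n`,
`c_j^s = (∏_{h ∈ H_j} u_{k,O_{p^n}(k) n_{H,K}}(g^{r p^{n-s}} h K̂ + 1 - K̂))^{p^{s-j-1}}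
· ∏_{l=j+1}^{s-1} (c_l^s)⁻¹ · ∏_{l=0}^{j-1} (c_l^{s+l-j})⁻¹`,
where `H_j = ⟨g^{p^{n-j}}, K⟩`. -/
def SatisfiesC [Finite G] (K : Subgroup G) (g : G) (p n nHK k : ℕ) (r : ℤ)
    (c : ℕ → ℕ → MonoidAlgebra ℚ G) : Prop :=
  (∀ s, s ≤ n → c s s = 1) ∧
  ∀ j s : ℕ, j < s → s ≤ n →
    c j s =
      (finProd ((((Subgroup.closure ({g ^ p ^ (n - j)} ∪ (K : Set G)) : Subgroup G) :
            Set G)).toFinite.toFinset)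
          (fun h =>
            bassUnit (MonoidAlgebra.of ℚ G (g ^ (r * (p : ℤ) ^ (n - s)) * h) * hatQ K
                + 1 - hatQ K)
              (orderOf (g ^ (r * (p : ℤ) ^ (n - s)) * h)) k
              (orderOf ((k : ZMod (p ^ n))) * nHK))) ^ p ^ (s - j - 1) *
      (List.map (fun l => Ring.inverse (c l s)) (List.range' (j + 1) (s - (j + 1)))).prod *
      (List.map (fun l => Ring.inverse (c l (s + l - j))) (List.range j)).prod

/-- the component `R·e` of a ring determined by a central idempotent `e`,
as a non-unital subring. -/
def componentNUS {R : Type*} [Ring R] (e : R) : NonUnitalSubring R where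
  carrier := {x | x * e = x}
  add_mem' := by
    intro x y hx hy
    simp only [Set.mem_setOf_eq] at *
    rw [add_mul, hx, hy]
  mul_mem' := by
    intro x y hx hy
    simp only [Set.mem_setOf_eq] at *
    rw [mul_assoc, hy]
  neg_mem' := by
    intro x hx
    simp only [Set.mem_setOf_eq] at *
    rw [neg_mul, hx]
  zero_mem' := by simp

/-- the corner `E·R·E` determined by an element `E` of a ring,
as a non-unital subring. -/
def cornerNUS {R : Type*} [Ring R] (E : R) : NonUnitalSubring R where
  carrier := Set.range fun γ => E * γ * E
  add_mem' := by
    rintro _ _ ⟨γ, rfl⟩ ⟨δ, rfl⟩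
    exact ⟨γ + δ, by noncomm_ring⟩
  mul_mem' := by
    rintro _ _ ⟨γ, rfl⟩ ⟨δ, rfl⟩
    exact ⟨γ * E * E * δ, by noncomm_ring⟩
  neg_mem' := by
    rintro _ ⟨γ, rfl⟩
    exact ⟨-γ, by noncomm_ring⟩
  zero_mem' := ⟨0, by noncomm_ring⟩

/-- the canonical ring homomorphism `ℤG → ℚG`. -/
def intToRat (G : Type*) [Group G] : MonoidAlgebra ℤ G →ₐ[ℤ] MonoidAlgebra ℚ G :=
  MonoidAlgebra.lift ℤ (MonoidAlgebra ℚ G) G (MonoidAlgebra.of ℚ G)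

/- Write `S_j = 1 + x + ⋯ + x^(j-1)` for `x = gN`, of order `d`. Since `x S_d = S_d`, the group
`ℤ S_d` is stable under multiplication by polynomials in `x`; modulo `ℤ S_d`, `S_j` depends only on
`j mod d`, and a Bass unit `u_{k,m}(x)` (of any order `n` divisible by `d`) is congruent to `S_k^m`.
Taking `k' ≡ k (mod d)` coprime to `|g|` and `m' = m s` with `s = φ(|g|)`, the image
`u_{k',m'}(x)` of `u_{k',m'}(g)` is therefore congruent to `u_{k,m}(x)^s` modulo `ℤ S_d`.
Both have augmentation `1` while `S_d` has augmentation `d ≠ 0`, so they are equal. -/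

open Finset AddSubgroup

theorem Nat.exists_modEq_coprime {d n k : ℕ} (hdn : d ∣ n) (hn : n ≠ 0) (hk : k.Coprime d) :
    ∃ k', 0 < k' ∧ k' ≡ k [MOD d] ∧ k'.Coprime n := by
  have : NeZero n := ⟨hn⟩
  obtain ⟨u, hu⟩ := ZMod.unitsMap_surjective hdn (ZMod.unitOfCoprime k hk)
  refine ⟨(u : ZMod n).val + n, by omega, ?_,
    Nat.coprime_add_self_left.mpr (ZMod.val_coe_unit_coprime u)⟩
  have hval : ((u : ZMod n).val : ZMod d) = k := by
    rw [ZMod.natCast_val, ← ZMod.unitsMap_val hdn, hu, ZMod.coe_unitOfCoprime]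
  exact ((Nat.modEq_zero_iff_dvd.mpr hdn).add_left _).trans
    ((ZMod.natCast_eq_natCast_iff _ _ _).mp hval)

section ZMultiples

variable {R : Type*} [Ring R] {h a y : R}

theorem mul_mem_zmultiples (ha : a * h ∈ zmultiples h) (hy : y ∈ zmultiples h) :
    a * y ∈ zmultiples h := by
  obtain ⟨c, rfl⟩ := mem_zmultiples_iff.mp hy
  rw [mul_smul_comm]
  exact zsmul_mem ha c

theorem mem_zmultiples_mul (ha : h * a ∈ zmultiples h) (hy : y ∈ zmultiples h) :
    y * a ∈ zmultiples h := by
  obtain ⟨c, rfl⟩ := mem_zmultiples_iff.mp hy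
  rw [smul_mul_assoc]
  exact zsmul_mem ha c

theorem pow_mul_mem_zmultiples (ha : a * h ∈ zmultiples h) (e : ℕ) :
    a ^ e * h ∈ zmultiples h := by
  induction e with
  | zero => rw [pow_zero, one_mul]; exact mem_zmultiples h
  | succ e ih => rw [pow_succ', mul_assoc]; exact mul_mem_zmultiples ha ih

theorem add_pow_sub_pow_mem_zmultiples (hc : Commute a h) (ha : a * h ∈ zmultiples h)
    (hh : h * h ∈ zmultiples h) (hy : y ∈ zmultiples h) (e : ℕ) :
    (a + y) ^ e - a ^ e ∈ zmultiples h := by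
  induction e with
  | zero => simp
  | succ e ih =>
    have hsplit : (a + y) ^ (e + 1) - a ^ (e + 1) =
        ((a + y) ^ e - a ^ e) * a + ((a + y) ^ e - a ^ e) * y + a ^ e * y := by
      rw [pow_succ, pow_succ]; noncomm_ring
    rw [hsplit]
    exact add_mem (add_mem (mem_zmultiples_mul (hc.eq ▸ ha) ih)
      (mem_zmultiples_mul (mul_mem_zmultiples hh hy) ih))
      (mul_mem_zmultiples (pow_mul_mem_zmultiples ha e) hy)

theorem eq_zero_of_mem_zmultiples_of_map_eq_zero {F : Type*} [FunLike F R ℤ]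
    [AddMonoidHomClass F R ℤ] (f : F) (hf : f h ≠ 0) (hy : y ∈ zmultiples h) (hfy : f y = 0) :
    y = 0 := by
  obtain ⟨c, rfl⟩ := mem_zmultiples_iff.mp hy
  rw [map_zsmul, smul_eq_mul, mul_eq_zero] at hfy
  rw [hfy.resolve_right hf, zero_smul]

end ZMultiples

section GeomSum

variable {R : Type*} [Ring R] {x : R} {d : ℕ}

theorem pow_mul_geom_sum_of_pow_eq_one (hx : x ^ d = 1) (c : ℕ) :
    x ^ c * ∑ i ∈ range d, x ^ i = ∑ i ∈ range d, x ^ i := by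
  have hx1 : x * ∑ i ∈ range d, x ^ i = ∑ i ∈ range d, x ^ i := by
    have := mul_geom_sum x d
    rwa [hx, sub_self, sub_mul, one_mul, sub_eq_zero] at this
  induction c with
  | zero => rw [pow_zero, one_mul]
  | succ c ih => rw [pow_succ', mul_assoc, ih, hx1]

theorem commute_geom_sum (x : R) (k l : ℕ) :
    Commute (∑ i ∈ range k, x ^ i) (∑ i ∈ range l, x ^ i) :=
  Commute.sum_left _ _ _ fun i _ => Commute.sum_right _ _ _ fun j _ => Commute.pow_pow_self x i j

theorem geom_sum_mul_mem_zmultiples (hx : x ^ d = 1) (k : ℕ) :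
    (∑ i ∈ range k, x ^ i) * ∑ i ∈ range d, x ^ i ∈ zmultiples (∑ i ∈ range d, x ^ i) := by
  rw [Finset.sum_mul]
  simp only [pow_mul_geom_sum_of_pow_eq_one hx, sum_const, card_range, ← natCast_zsmul]
  exact zsmul_mem_zmultiples _ _

theorem geom_sum_add_mul_of_pow_eq_one (hx : x ^ d = 1) (k q : ℕ) :
    ∑ i ∈ range (k + d * q), x ^ i = ∑ i ∈ range k, x ^ i + (q : ℤ) • ∑ i ∈ range d, x ^ i := by
  induction q with
  | zero => simp
  | succ q ih =>
    rw [Nat.mul_succ, ← add_assoc, sum_range_add, ih]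
    simp only [pow_add x (k + d * q), ← mul_sum, pow_mul_geom_sum_of_pow_eq_one hx]
    push_cast
    rw [add_smul, one_smul, add_assoc]

theorem geom_sum_sub_geom_sum_mem_zmultiples (hx : x ^ d = 1) {k l : ℕ} (hkl : k ≡ l [MOD d]) :
    ∑ i ∈ range k, x ^ i - ∑ i ∈ range l, x ^ i ∈ zmultiples (∑ i ∈ range d, x ^ i) := by
  rw [← Nat.mod_add_div k d, ← Nat.mod_add_div l d, geom_sum_add_mul_of_pow_eq_one hx,
    geom_sum_add_mul_of_pow_eq_one hx, hkl, add_sub_add_left_eq_sub, ← sub_smul]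
  exact zsmul_mem_zmultiples _ _

theorem bassUnit_sub_geom_sum_pow_mem_zmultiples (hx : x ^ d = 1) {n : ℕ} (hdn : d ∣ n)
    (k m : ℕ) :
    bassUnit x n k m - (∑ i ∈ range k, x ^ i) ^ m ∈ zmultiples (∑ i ∈ range d, x ^ i) := by
  obtain ⟨t, rfl⟩ := hdn
  have := geom_sum_add_mul_of_pow_eq_one hx 0 t
  rw [zero_add, range_zero, sum_empty, zero_add] at this
  rw [bassUnit, add_sub_cancel_left, this, smul_smul]
  exact zsmul_mem_zmultiples _ _

theorem bassUnit_mul_sub_bassUnit_pow_mem_zmultiples (hx : x ^ d = 1) {n k k' : ℕ}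
    (hdn : d ∣ n) (hk : k' ≡ k [MOD d]) (m s : ℕ) :
    bassUnit x n k' (m * s) - bassUnit x d k m ^ s ∈ zmultiples (∑ i ∈ range d, x ^ i) := by
  have hSk := geom_sum_mul_mem_zmultiples hx k
  have hSd := geom_sum_mul_mem_zmultiples hx d
  have hlhs : bassUnit x n k' (m * s) - (∑ i ∈ range k, x ^ i) ^ (m * s) ∈
      zmultiples (∑ i ∈ range d, x ^ i) := by
    have hpow := add_pow_sub_pow_mem_zmultiples (commute_geom_sum x k d) hSk hSd
      (geom_sum_sub_geom_sum_mem_zmultiples hx hk) (m * s)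
    rw [add_sub_cancel] at hpow
    rw [← sub_add_sub_cancel _ ((∑ i ∈ range k', x ^ i) ^ (m * s))]
    exact add_mem (bassUnit_sub_geom_sum_pow_mem_zmultiples hx hdn k' (m * s)) hpow
  have hrhs : bassUnit x d k m ^ s - (∑ i ∈ range k, x ^ i) ^ (m * s) ∈
      zmultiples (∑ i ∈ range d, x ^ i) := by
    have hpow := add_pow_sub_pow_mem_zmultiples ((commute_geom_sum x k d).pow_left m)
      (pow_mul_mem_zmultiples hSk m) hSd (bassUnit_sub_geom_sum_pow_mem_zmultiples hx dvd_rfl k m) s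
    rwa [add_sub_cancel, ← pow_mul] at hpow
  rw [← sub_sub_sub_cancel_right _ _ ((∑ i ∈ range k, x ^ i) ^ (m * s))]
  exact sub_mem hlhs hrhs

end GeomSum

theorem map_bassUnit {R S F : Type*} [Ring R] [Ring S] [FunLike F R S] [RingHomClass F R S]
    (f : F) (x : R) (n k m : ℕ) : f (bassUnit x n k m) = bassUnit (f x) n k m := by
  simp only [bassUnit, map_add, map_pow, map_sum, map_zsmul]

theorem bassUnit_one {R : Type*} [Ring R] {n k m : ℕ} (h : k ^ m ≡ 1 [MOD n]) :
    bassUnit (1 : R) n k m = 1 := by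
  have hdvd : (n : ℤ) ∣ 1 - (k : ℤ) ^ m := by exact_mod_cast Nat.modEq_iff_dvd.mp h
  simp only [bassUnit, one_pow, sum_const, card_range, nsmul_one]
  rw [← Int.cast_natCast (R := R) n, zsmul_eq_mul, ← Int.cast_mul, Int.ediv_mul_cancel hdvd]
  push_cast
  abel

theorem bassUnit_mul_eq_bassUnit_pow {R F : Type*} [Ring R] [FunLike F R ℤ]
    [RingHomClass F R ℤ] (ε : F) {x : R} (hεx : ε x = 1) {d n k k' m s : ℕ} (hx : x ^ d = 1)
    (hd : d ≠ 0) (hdn : d ∣ n) (hk : k' ≡ k [MOD d]) (hk'n : k' ^ (m * s) ≡ 1 [MOD n])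
    (hkd : k ^ m ≡ 1 [MOD d]) :
    bassUnit x n k' (m * s) = bassUnit x d k m ^ s := by
  refine sub_eq_zero.mp (eq_zero_of_mem_zmultiples_of_map_eq_zero ε ?_
    (bassUnit_mul_sub_bassUnit_pow_mem_zmultiples hx hdn hk m s) ?_)
  · simp [hεx, hd]
  · rw [map_sub, map_pow, map_bassUnit, map_bassUnit, hεx, bassUnit_one hk'n, bassUnit_one hkd,
      one_pow, sub_self]

theorem statement19_general {G : Type*} [Group G] [Fintype G]
    (N : Subgroup G) [N.Normal] (g : G) (k m : ℕ) (hm : 0 < m)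
    (hkm : k ^ m ≡ 1 [MOD orderOf ((g : G ⧸ N))]) :
    ∃ s k' m' : ℕ, 0 < s ∧ 0 < k' ∧ 0 < m' ∧
      k' ≡ k [MOD orderOf ((g : G ⧸ N))] ∧
      k' ^ m' ≡ 1 [MOD orderOf g] ∧
      MonoidAlgebra.mapDomainRingHom ℤ (QuotientGroup.mk' N)
          (bassUnit (MonoidAlgebra.of ℤ G g) (orderOf g) k' m') =
        (bassUnit (MonoidAlgebra.of ℤ (G ⧸ N) ((g : G ⧸ N)))
            (orderOf ((g : G ⧸ N))) k m) ^ s := by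
  set n := orderOf g
  set d := orderOf (g : G ⧸ N)
  have hn : 0 < n := orderOf_pos g
  have hdn : d ∣ n := orderOf_map_dvd (QuotientGroup.mk' N) g
  have hd : d ≠ 0 := (Nat.pos_of_dvd_of_pos hdn hn).ne'
  have hkd : k.Coprime d := by
    obtain ⟨m, rfl⟩ := Nat.exists_eq_add_one_of_ne_zero hm.ne'
    exact Nat.coprime_of_mul_modEq_one (k ^ m) (pow_succ' k m ▸ hkm)
  obtain ⟨k', hk', hk'k, hk'n⟩ := Nat.exists_modEq_coprime hdn hn.ne' hkd
  have hs : 0 < n.totient := Nat.totient_pos.mpr hn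
  have hk'm' : k' ^ (m * n.totient) ≡ 1 [MOD n] := by
    rw [pow_mul]
    exact Nat.ModEq.pow_totient (hk'n.pow_left m)
  refine ⟨n.totient, k', m * n.totient, hs, hk', Nat.mul_pos hm hs, hk'k, hk'm', ?_⟩
  have hx : (MonoidAlgebra.of ℤ (G ⧸ N) (g : G ⧸ N)) ^ d = 1 := by
    rw [← map_pow, pow_orderOf_eq_one, map_one]
  have hgx : MonoidAlgebra.mapDomainRingHom ℤ (QuotientGroup.mk' N) (MonoidAlgebra.of ℤ G g) =
      MonoidAlgebra.of ℤ (G ⧸ N) (g : G ⧸ N) := by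
    simp only [MonoidAlgebra.of_apply, MonoidAlgebra.mapDomainRingHom_apply,
      MonoidAlgebra.mapDomain_single, QuotientGroup.mk'_apply]
  rw [map_bassUnit, hgx]
  exact bassUnit_mul_eq_bassUnit_pow (MonoidAlgebra.lift ℤ ℤ (G ⧸ N) 1) (by simp) hx hd hdn
    hk'k hk'm' hkm

/-- A power of a Bass unit of `ℤ(G/N)` based on `gN` is the
natural image of a Bass unit of `ℤG` based on `g`. -/
theorem statement19 {G : Type*} [Group G] [Fintype G]
    (N : Subgroup G) [N.Normal] (g : G) (k m : ℕ) (hk : 0 < k) (hm : 0 < m)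
    (hkm : k ^ m ≡ 1 [MOD orderOf ((g : G ⧸ N))]) :
    ∃ s k' m' : ℕ, 0 < s ∧ 0 < k' ∧ 0 < m' ∧
      k' ≡ k [MOD orderOf ((g : G ⧸ N))] ∧
      k' ^ m' ≡ 1 [MOD orderOf g] ∧
      MonoidAlgebra.mapDomainRingHom ℤ (QuotientGroup.mk' N)
          (bassUnit (MonoidAlgebra.of ℤ G g) (orderOf g) k' m') =
        (bassUnit (MonoidAlgebra.of ℤ (G ⧸ N) ((g : G ⧸ N)))
            (orderOf ((g : G ⧸ N))) k m) ^ s :=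
  statement19_general N g k m hm hkm

end

end ArXiv12091269
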